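/- arXiv:1906.01920 — 5 statements merged into one kernel-verified Lean document; each statement's English description precedes it below -/
import Mathlib

section
/- For finite sets X₁, X₂ with actions of finite groups G₁, G₂ respectively, the orbifold Euler characteristic is multiplicative: χ^(1)(X₁ × X₂, G₁ × G₂) = χ^(1)(X₁, G₁) · χ^(1)(X₂, G₂), where G₁ × G₂ acts componentwise on X₁ × X₂. -/
/-- The centralizer of `g` acts on the fixed-point set of `g`. -/
instance fixedByCentralizerAction {G : Type} [Group G] (X : Type) [MulAction G X] (g : G) :
    MulAction (Subgroup.centralizer ({g} : Set G)) (MulAction.fixedBy X g) where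
  smul h x := ⟨(h : G) • (x : X), by
    have hc : g * (h : G) = (h : G) * g :=
      Subgroup.mem_centralizer_iff.mp h.2 g (Set.mem_singleton g)
    have hx : g • (x : X) = (x : X) := x.2
    simp only [MulAction.mem_fixedBy]
    rw [← mul_smul, hc, mul_smul, hx]⟩
  one_smul x := Subtype.ext (one_smul G (x : X))
  mul_smul a b x := Subtype.ext (mul_smul (a : G) (b : G) (x : X))

/-- The order-`k` (orbifold) Euler characteristic of a `G`-set `X`. -/
noncomputable def chiOrb : ℕ → (X : Type) → (G : Type) → [Group G] → [MulAction G X] → ℕ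
  | 0, X, G, _, _ => Nat.card (MulAction.orbitRel.Quotient G X)
  | k + 1, X, G, _, _ => ∑ᶠ c : ConjClasses G,
      chiOrb k (MulAction.fixedBy X (Quotient.out c))
        (Subgroup.centralizer ({Quotient.out c} : Set G))

/-- Componentwise action of `G₁ × G₂` on `X₁ × X₂`. -/
instance prodProdMulAction {G₁ G₂ X₁ X₂ : Type} [Group G₁] [Group G₂]
    [MulAction G₁ X₁] [MulAction G₂ X₂] : MulAction (G₁ × G₂) (X₁ × X₂) where
  smul g x := (g.1 • x.1, g.2 • x.2)
  one_smul x := Prod.ext (one_smul G₁ x.1) (one_smul G₂ x.2)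
  mul_smul a b x := Prod.ext (mul_smul a.1 b.1 x.1) (mul_smul a.2 b.2 x.2)

open MulAction

section Aux

/-- Orbit quotients of equivalent actions are equivalent. -/
def orbitQuotCongr {H K Y Z : Type} [Group H] [Group K] [MulAction H Y] [MulAction K Z]
    (e : H ≃* K) (f : Y ≃ Z) (hf : ∀ (h : H) (y : Y), f (h • y) = e h • f y) :
    orbitRel.Quotient H Y ≃ orbitRel.Quotient K Z :=
  Quotient.congr f (by
    intro a b
    rw [orbitRel_apply, orbitRel_apply, mem_orbit_iff, mem_orbit_iff]
    constructor
    · rintro ⟨h, rfl⟩; exact ⟨e h, (hf h b).symm⟩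
    · rintro ⟨k, hk⟩
      refine ⟨e.symm k, f.injective ?_⟩
      rw [hf, MulEquiv.apply_symm_apply, hk])

noncomputable def Nterm (X : Type) (G : Type) [Group G] [MulAction G X] (g : G) : ℕ :=
  Nat.card (orbitRel.Quotient (Subgroup.centralizer ({g} : Set G)) (fixedBy X g))

lemma Nterm_conj (X : Type) (G : Type) [Group G] [MulAction G X] {g g' : G}
    (h : IsConj g g') : Nterm X G g = Nterm X G g' := by
  rw [isConj_iff] at h
  obtain ⟨c, rfl⟩ := h
  refine Nat.card_congr (orbitQuotCongr ?_ ?_ ?_)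
  · refine
      { toFun := fun z => ⟨c * z * c⁻¹, ?_⟩
        invFun := fun z => ⟨c⁻¹ * z * c, ?_⟩
        left_inv := fun z => ?_
        right_inv := fun z => ?_
        map_mul' := fun a b => ?_ }
    · rw [Subgroup.mem_centralizer_iff]
      rintro m hm; rw [Set.mem_singleton_iff] at hm; subst hm
      have hz := Subgroup.mem_centralizer_iff.mp z.2 g (Set.mem_singleton g)
      calc c * g * c⁻¹ * (c * ↑z * c⁻¹) = c * (g * ↑z) * c⁻¹ := by group
        _ = c * (↑z * g) * c⁻¹ := by rw [hz]
        _ = c * ↑z * c⁻¹ * (c * g * c⁻¹) := by group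
    · rw [Subgroup.mem_centralizer_iff]
      intro m hm; rw [Set.mem_singleton_iff] at hm; rw [hm]
      have hz := Subgroup.mem_centralizer_iff.mp z.2 (c * g * c⁻¹)
        (Set.mem_singleton _)
      have hz' : g * (c⁻¹ * ↑z * c) = c⁻¹ * ((c * g * c⁻¹) * ↑z) * c := by group
      rw [hz', hz]; group
    · ext; simp; group
    · ext; simp; group
    · ext; simp
  · refine
      { toFun := fun x => ⟨c • (x : X), ?_⟩
        invFun := fun x => ⟨c⁻¹ • (x : X), ?_⟩
        left_inv := fun x => ?_
        right_inv := fun x => ?_ }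
    · have hx : g • (x : X) = (x : X) := x.2
      show (c * g * c⁻¹) • (c • (x : X)) = c • (x : X)
      rw [smul_smul]
      have : c * g * c⁻¹ * c = c * g := by group
      rw [this, mul_smul, hx]
    · have hx : (c * g * c⁻¹) • (x : X) = (x : X) := x.2
      show g • (c⁻¹ • (x : X)) = c⁻¹ • (x : X)
      rw [smul_smul]
      have : g * c⁻¹ = c⁻¹ * (c * g * c⁻¹) := by group
      rw [this, mul_smul, hx]
    · ext; show c⁻¹ • c • (x : X) = (x : X); rw [smul_smul]; simp
    · ext; show c • c⁻¹ • (x : X) = (x : X); rw [smul_smul]; simp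
  · intro h y
    ext
    show c • ((h : G) • (y : X)) = (c * (h : G) * c⁻¹) • (c • (y : X))
    rw [smul_smul, smul_smul]
    congr 1; group


lemma Nterm_prod {X₁ G₁ X₂ G₂ : Type} [Group G₁] [Group G₂]
    [MulAction G₁ X₁] [MulAction G₂ X₂] (g₁ : G₁) (g₂ : G₂) :
    Nterm (X₁ × X₂) (G₁ × G₂) (g₁, g₂) = Nterm X₁ G₁ g₁ * Nterm X₂ G₂ g₂ := by
  classical
  set C₁ := Subgroup.centralizer ({g₁} : Set G₁) with hC₁
  set C₂ := Subgroup.centralizer ({g₂} : Set G₂) with hC₂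
  let e : Subgroup.centralizer ({(g₁, g₂)} : Set (G₁ × G₂)) ≃* (C₁ × C₂) := by
    refine
      { toFun := fun z => (⟨z.1.1, ?_⟩, ⟨z.1.2, ?_⟩)
        invFun := fun p => ⟨(p.1.1, p.2.1), ?_⟩
        left_inv := fun z => rfl
        right_inv := fun p => rfl
        map_mul' := fun a b => rfl }
    · have hz := Subgroup.mem_centralizer_iff.mp z.2 (g₁, g₂) (Set.mem_singleton _)
      rw [Subgroup.mem_centralizer_iff]
      intro m hm; rw [Set.mem_singleton_iff] at hm; rw [hm]
      exact congrArg Prod.fst hz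
    · have hz := Subgroup.mem_centralizer_iff.mp z.2 (g₁, g₂) (Set.mem_singleton _)
      rw [Subgroup.mem_centralizer_iff]
      intro m hm; rw [Set.mem_singleton_iff] at hm; rw [hm]
      exact congrArg Prod.snd hz
    · rw [Subgroup.mem_centralizer_iff]
      intro m hm; rw [Set.mem_singleton_iff] at hm; rw [hm]
      have h1 := Subgroup.mem_centralizer_iff.mp p.1.2 g₁ (Set.mem_singleton _)
      have h2 := Subgroup.mem_centralizer_iff.mp p.2.2 g₂ (Set.mem_singleton _)
      exact Prod.ext h1 h2
  let f : fixedBy (X₁ × X₂) (g₁, g₂) ≃ (fixedBy X₁ g₁ × fixedBy X₂ g₂) := by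
    refine
      { toFun := fun x => (⟨x.1.1, congrArg Prod.fst x.2⟩, ⟨x.1.2, congrArg Prod.snd x.2⟩)
        invFun := fun p => ⟨(p.1.1, p.2.1), Prod.ext p.1.2 p.2.2⟩
        left_inv := fun x => rfl
        right_inv := fun p => rfl }
  have key : Nterm (X₁ × X₂) (G₁ × G₂) (g₁, g₂)
      = Nat.card (orbitRel.Quotient (C₁ × C₂) (fixedBy X₁ g₁ × fixedBy X₂ g₂)) :=
    Nat.card_congr (orbitQuotCongr e f (fun h y => Prod.ext (Subtype.ext rfl) (Subtype.ext rfl)))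
  rw [key]
  have e2 : orbitRel.Quotient (C₁ × C₂) (fixedBy X₁ g₁ × fixedBy X₂ g₂) ≃
      orbitRel.Quotient C₁ (fixedBy X₁ g₁) × orbitRel.Quotient C₂ (fixedBy X₂ g₂) := by
    refine Equiv.trans (Quotient.congrRight (fun a b => ?_))
      (Setoid.prodQuotientEquiv (orbitRel C₁ (fixedBy X₁ g₁))
        (orbitRel C₂ (fixedBy X₂ g₂))).symm
    rw [Setoid.prod_apply, orbitRel_apply, orbitRel_apply, orbitRel_apply,
      mem_orbit_iff, mem_orbit_iff, mem_orbit_iff]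
    constructor
    · rintro ⟨h, rfl⟩; exact ⟨⟨h.1, rfl⟩, ⟨h.2, rfl⟩⟩
    · rintro ⟨⟨h₁, e₁⟩, ⟨h₂, e₂⟩⟩; exact ⟨(h₁, h₂), Prod.ext e₁ e₂⟩
  rw [Nat.card_congr e2, Nat.card_prod]
  rfl

lemma isConj_prod_iff {G₁ G₂ : Type} [Group G₁] [Group G₂] {a b : G₁ × G₂} :
    IsConj a b ↔ IsConj a.1 b.1 ∧ IsConj a.2 b.2 := by
  simp only [isConj_iff]
  constructor
  · rintro ⟨c, rfl⟩; exact ⟨⟨c.1, rfl⟩, ⟨c.2, rfl⟩⟩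
  · rintro ⟨⟨c₁, h₁⟩, ⟨c₂, h₂⟩⟩; exact ⟨(c₁, c₂), Prod.ext h₁ h₂⟩

def ccEquiv (G₁ G₂ : Type) [Group G₁] [Group G₂] :
    ConjClasses (G₁ × G₂) ≃ ConjClasses G₁ × ConjClasses G₂ :=
  (Quotient.congrRight fun _ _ => isConj_prod_iff).trans
    (Setoid.prodQuotientEquiv (IsConj.setoid G₁) (IsConj.setoid G₂)).symm

lemma ccEquiv_mk (G₁ G₂ : Type) [Group G₁] [Group G₂] (a : G₁) (b : G₂) :
    ccEquiv G₁ G₂ (ConjClasses.mk (a, b)) = (ConjClasses.mk a, ConjClasses.mk b) := rfl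

lemma isConj_mk_out {G : Type} [Group G] (a : G) :
    IsConj (Quotient.out (ConjClasses.mk a)) a :=
  @Quotient.mk_out G (IsConj.setoid G) a

lemma chiOrb_one_eq (X G : Type) [Group G] [MulAction G X] :
    chiOrb 1 X G = ∑ᶠ c : ConjClasses G, Nterm X G (Quotient.out c) := by
  rw [show (1 : ℕ) = 0 + 1 from rfl, chiOrb]
  exact finsum_congr fun c => by rw [chiOrb]; rfl

end Aux

/-- The orbifold Euler characteristic is multiplicative. -/
theorem chiOrb_one_mul (X₁ G₁ X₂ G₂ : Type) [Group G₁] [Group G₂]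
    [MulAction G₁ X₁] [MulAction G₂ X₂] [Finite G₁] [Finite G₂] [Finite X₁] [Finite X₂] :
    chiOrb 1 (X₁ × X₂) (G₁ × G₂) = chiOrb 1 X₁ G₁ * chiOrb 1 X₂ G₂ := by
  classical
  have := Fintype.ofFinite (ConjClasses G₁)
  have := Fintype.ofFinite (ConjClasses G₂)
  have := Fintype.ofFinite (ConjClasses (G₁ × G₂))
  rw [chiOrb_one_eq, chiOrb_one_eq, chiOrb_one_eq,
    finsum_eq_sum_of_fintype, finsum_eq_sum_of_fintype, finsum_eq_sum_of_fintype]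
  have step : ∀ c : ConjClasses (G₁ × G₂),
      Nterm (X₁ × X₂) (G₁ × G₂) (Quotient.out c)
        = Nterm X₁ G₁ (Quotient.out ((ccEquiv G₁ G₂ c).1))
          * Nterm X₂ G₂ (Quotient.out ((ccEquiv G₁ G₂ c).2)) := by
    intro c
    have hc : ccEquiv G₁ G₂ c
        = (ConjClasses.mk (Quotient.out c).1, ConjClasses.mk (Quotient.out c).2) := by
      conv_lhs => rw [← Quotient.out_eq c]
      exact ccEquiv_mk G₁ G₂ (Quotient.out c).1 (Quotient.out c).2
    have h1 : Nterm (X₁ × X₂) (G₁ × G₂) (Quotient.out c)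
        = Nterm X₁ G₁ (Quotient.out c).1 * Nterm X₂ G₂ (Quotient.out c).2 :=
      Nterm_prod (Quotient.out c).1 (Quotient.out c).2
    rw [h1, hc]
    rw [Nterm_conj X₁ G₁ (isConj_mk_out (Quotient.out c).1).symm,
      Nterm_conj X₂ G₂ (isConj_mk_out (Quotient.out c).2).symm]
  rw [Finset.sum_congr rfl (fun c _ => step c)]
  rw [Fintype.sum_equiv (ccEquiv G₁ G₂) _
    (fun p : ConjClasses G₁ × ConjClasses G₂ =>
      Nterm X₁ G₁ (Quotient.out p.1) * Nterm X₂ G₂ (Quotient.out p.2)) (fun c => rfl)]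
  rw [Fintype.sum_prod_type, Finset.sum_mul_sum]
end

section
/- For every k ≥ 0, the order-k Euler characteristic of finite G-sets is multiplicative: χ^(k)(X₁ × X₂, G₁ × G₂) = χ^(k)(X₁, G₁) · χ^(k)(X₂, G₂). -/
/-! `χ^(k)` is invariant under transport along a group isomorphism `e : G ≃* G'` together with an
`e`-equivariant bijection `X ≃ X'`; applied to inner automorphisms, this makes
`χ^(k)(X^⟨g⟩, C_G(g))` depend only on the conjugacy class of `g`, so the choice of representatives
in the recursion is harmless. For a product, orbits, conjugacy classes, centralizers and fixed-point
sets all split as products, so by induction on `k` the sum over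
`ConjClasses (G₁ × G₂) ≃ ConjClasses G₁ × ConjClasses G₂` factors as a product of sums. -/

open MulAction Subgroup

-- If the support on the right is infinite, so is that of `f` or of `g`, and both sides are the
-- junk value `0`.
theorem finsum_mul_finsum {α β R : Type*} [NonUnitalNonAssocSemiring R] [NoZeroDivisors R]
    (f : α → R) (g : β → R) :
    (∑ᶠ a, f a) * (∑ᶠ b, g b) = ∑ᶠ p : α × β, f p.1 * g p.2 := by
  have hsupp : Function.support (fun p : α × β => f p.1 * g p.2)
      = Function.support f ×ˢ Function.support g := by
    ext p
    simp [Set.mem_prod]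
  by_cases hfin : (Function.support fun p : α × β => f p.1 * g p.2).Finite
  · rw [finsum_curry _ hfin, finsum_mul]
    simp_rw [mul_finsum]
  · rw [finsum_of_infinite_support hfin]
    rw [hsupp] at hfin
    rcases Set.infinite_prod.mp hfin with ⟨hf, -⟩ | ⟨hg, -⟩
    · rw [finsum_of_infinite_support hf, zero_mul]
    · rw [finsum_of_infinite_support hg, mul_zero]

section Transport

variable {G G' X X' : Type} [Group G] [Group G'] [MulAction G X] [MulAction G' X']

def centralizerCongr (e : G ≃* G') (a : G) : centralizer {a} ≃* centralizer {e a} :=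
  { e.toEquiv.subtypeEquiv fun u => by
      simp only [mem_centralizer_singleton_iff, MulEquiv.toEquiv_eq_coe, MulEquiv.coe_toEquiv,
        ← map_mul, EmbeddingLike.apply_eq_iff_eq] with
    map_mul' := fun u v => Subtype.ext (map_mul e (u : G) v) }

def fixedByCongr {e : G ≃* G'} {f : X ≃ X'} (hf : ∀ g x, f (g • x) = e g • f x) (a : G) :
    fixedBy X a ≃ fixedBy X' (e a) :=
  f.subtypeEquiv fun x => by
    rw [mem_fixedBy, mem_fixedBy, ← hf, f.apply_eq_iff_eq]

theorem fixedByCongr_smul {e : G ≃* G'} {f : X ≃ X'} (hf : ∀ g x, f (g • x) = e g • f x) (a : G)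
    (u : centralizer {a}) (x : fixedBy X a) :
    fixedByCongr hf a (u • x) = centralizerCongr e a u • fixedByCongr hf a x :=
  Subtype.ext (hf (u : G) x)

def orbitRelQuotientCongr {e : G ≃* G'} {f : X ≃ X'} (hf : ∀ g x, f (g • x) = e g • f x) :
    orbitRel.Quotient G X ≃ orbitRel.Quotient G' X' :=
  Quotient.congr f fun x y => by
    simp only [orbitRel_apply, mem_orbit_iff]
    constructor
    · rintro ⟨g, rfl⟩
      exact ⟨e g, (hf g y).symm⟩
    · rintro ⟨g', hg'⟩
      exact ⟨e.symm g', f.injective (by rw [hf, e.apply_symm_apply, hg'])⟩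

theorem ConjClasses.map_bijective (e : G ≃* G') :
    Function.Bijective (ConjClasses.map (e : G →* G')) := by
  refine Function.bijective_iff_has_inverse.mpr ⟨ConjClasses.map (e.symm : G' →* G), ?_, ?_⟩
  · intro c
    obtain ⟨a, rfl⟩ := ConjClasses.mk_surjective c
    exact congrArg ConjClasses.mk (e.symm_apply_apply a)
  · intro c
    obtain ⟨a, rfl⟩ := ConjClasses.mk_surjective c
    exact congrArg ConjClasses.mk (e.apply_symm_apply a)

theorem isConj_out_mk (a : G) : IsConj a (ConjClasses.mk a).out :=
  (Quotient.mk_out (s := IsConj.setoid G) a).symm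

theorem isConj_map_out (e : G ≃* G') (c : ConjClasses G) :
    IsConj (e c.out) (ConjClasses.map (e : G →* G') c).out := by
  obtain ⟨a, rfl⟩ := ConjClasses.mk_surjective c
  exact ((e : G →* G').map_isConj (isConj_out_mk a).symm).trans (isConj_out_mk (e a))

theorem equivariant_trans {G'' X'' : Type} [Group G''] [MulAction G'' X''] {e : G ≃* G'}
    {f : X ≃ X'} (hf : ∀ g x, f (g • x) = e g • f x) {e' : G' ≃* G''} {f' : X' ≃ X''}
    (hf' : ∀ g x, f' (g • x) = e' g • f' x) (g : G) (x : X) :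
    (f.trans f') (g • x) = (e.trans e') g • (f.trans f') x := by
  simp only [Equiv.trans_apply, MulEquiv.trans_apply, hf, hf']

theorem toPerm_smul_eq_conj_smul (u g : G) (x : X) :
    toPerm u (g • x) = MulAut.conj u g • toPerm u x := by
  simp only [toPerm_apply, MulAut.conj_apply, smul_smul, inv_mul_cancel_right]

theorem chiOrb_congr (k : ℕ) {e : G ≃* G'} {f : X ≃ X'} (hf : ∀ g x, f (g • x) = e g • f x) :
    chiOrb k X G = chiOrb k X' G' := by
  induction k generalizing G G' X X' with
  | zero => exact Nat.card_congr (orbitRelQuotientCongr hf)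
  | succ k ih =>
    refine finsum_eq_of_bijective _ (ConjClasses.map_bijective e) fun c => ?_
    -- the representative of `map e c` is only conjugate to `e c.out`: twist `e` by `MulAut.conj u`
    obtain ⟨u, hu⟩ := isConj_iff.mp (isConj_map_out e c)
    rw [← hu]
    exact ih (fixedByCongr_smul (equivariant_trans hf (toPerm_smul_eq_conj_smul u)) c.out)

theorem chiOrb_fixedBy_of_isConj (k : ℕ) {a b : G} (h : IsConj a b) :
    chiOrb k (fixedBy X a) (centralizer {a}) = chiOrb k (fixedBy X b) (centralizer {b}) := by
  obtain ⟨u, rfl⟩ := isConj_iff.mp h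
  exact chiOrb_congr k (fixedByCongr_smul (toPerm_smul_eq_conj_smul (X := X) u) a)

end Transport

section Prod

variable {G₁ G₂ X₁ X₂ : Type} [Group G₁] [Group G₂] [MulAction G₁ X₁] [MulAction G₂ X₂]

theorem Prod.isConj_iff {a b : G₁ × G₂} : IsConj a b ↔ IsConj a.1 b.1 ∧ IsConj a.2 b.2 := by
  simp only [_root_.isConj_iff, Prod.ext_iff, Prod.fst_mul, Prod.snd_mul, Prod.fst_inv,
    Prod.snd_inv, Prod.exists]
  exact ⟨fun ⟨c₁, c₂, h₁, h₂⟩ => ⟨⟨c₁, h₁⟩, ⟨c₂, h₂⟩⟩, fun ⟨⟨c₁, h₁⟩, ⟨c₂, h₂⟩⟩ => ⟨c₁, c₂, h₁, h₂⟩⟩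

def ConjClasses.prodEquiv : ConjClasses (G₁ × G₂) ≃ ConjClasses G₁ × ConjClasses G₂ :=
  (Quotient.congrRight fun _ _ => Prod.isConj_iff).trans (Setoid.prodQuotientEquiv _ _).symm

theorem ConjClasses.prodEquiv_mk (a : G₁ × G₂) :
    ConjClasses.prodEquiv (ConjClasses.mk a) = (ConjClasses.mk a.1, ConjClasses.mk a.2) :=
  rfl

theorem orbitRel_prod_iff {x y : X₁ × X₂} :
    orbitRel (G₁ × G₂) (X₁ × X₂) x y ↔ orbitRel G₁ X₁ x.1 y.1 ∧ orbitRel G₂ X₂ x.2 y.2 := by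
  simp only [orbitRel_apply, mem_orbit_iff, Prod.exists]
  exact ⟨fun ⟨g₁, g₂, h⟩ => ⟨⟨g₁, congrArg Prod.fst h⟩, ⟨g₂, congrArg Prod.snd h⟩⟩,
    fun ⟨⟨g₁, h₁⟩, ⟨g₂, h₂⟩⟩ => ⟨g₁, g₂, Prod.ext h₁ h₂⟩⟩

def orbitRelQuotientProdEquiv :
    orbitRel.Quotient (G₁ × G₂) (X₁ × X₂) ≃ orbitRel.Quotient G₁ X₁ × orbitRel.Quotient G₂ X₂ :=
  (Quotient.congrRight fun _ _ => orbitRel_prod_iff).trans (Setoid.prodQuotientEquiv _ _).symm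

theorem centralizer_singleton_prod (a₁ : G₁) (a₂ : G₂) :
    centralizer {(a₁, a₂)} = (centralizer {a₁}).prod (centralizer {a₂}) := by
  ext g
  simp only [mem_centralizer_singleton_iff, mem_prod, Prod.ext_iff, Prod.fst_mul, Prod.snd_mul]

def centralizerProdEquiv (a₁ : G₁) (a₂ : G₂) :
    centralizer {(a₁, a₂)} ≃* centralizer {a₁} × centralizer {a₂} :=
  (MulEquiv.subgroupCongr (centralizer_singleton_prod a₁ a₂)).trans (prodEquiv _ _)

def fixedByProdEquiv (a₁ : G₁) (a₂ : G₂) :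
    fixedBy (X₁ × X₂) (a₁, a₂) ≃ fixedBy X₁ a₁ × fixedBy X₂ a₂ :=
  (Equiv.subtypeEquivRight (q := fun x => x.1 ∈ fixedBy X₁ a₁ ∧ x.2 ∈ fixedBy X₂ a₂)
    fun _ => Prod.ext_iff).trans Equiv.subtypeProdEquivProd

theorem fixedByProdEquiv_smul (a₁ : G₁) (a₂ : G₂) (u : centralizer {(a₁, a₂)})
    (x : fixedBy (X₁ × X₂) (a₁, a₂)) :
    fixedByProdEquiv a₁ a₂ (u • x) = centralizerProdEquiv a₁ a₂ u • fixedByProdEquiv a₁ a₂ x :=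
  rfl

theorem chiOrb_fixedBy_prod (k : ℕ) (a₁ : G₁) (a₂ : G₂) :
    chiOrb k (fixedBy (X₁ × X₂) (a₁, a₂)) (centralizer {(a₁, a₂)})
      = chiOrb k (fixedBy X₁ a₁ × fixedBy X₂ a₂) (centralizer {a₁} × centralizer {a₂}) :=
  chiOrb_congr k (fixedByProdEquiv_smul a₁ a₂)

end Prod

theorem chiOrb_mul_general (k : ℕ) (X₁ G₁ X₂ G₂ : Type) [Group G₁] [Group G₂]
    [MulAction G₁ X₁] [MulAction G₂ X₂] :
    chiOrb k (X₁ × X₂) (G₁ × G₂) = chiOrb k X₁ G₁ * chiOrb k X₂ G₂ := by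
  induction k generalizing X₁ G₁ X₂ G₂ with
  | zero => exact (Nat.card_congr orbitRelQuotientProdEquiv).trans (Nat.card_prod _ _)
  | succ k ih =>
    refine (finsum_eq_of_bijective _ ConjClasses.prodEquiv.bijective fun c => ?_).trans
      (finsum_mul_finsum _ _).symm
    obtain ⟨a, rfl⟩ := ConjClasses.mk_surjective c
    have hout : IsConj (ConjClasses.mk a).out
        ((ConjClasses.mk a.1).out, (ConjClasses.mk a.2).out) :=
      (isConj_out_mk a).symm.trans (Prod.isConj_iff.mpr ⟨isConj_out_mk a.1, isConj_out_mk a.2⟩)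
    rw [chiOrb_fixedBy_of_isConj k hout, chiOrb_fixedBy_prod, ih, ConjClasses.prodEquiv_mk]

/-- The order-`k` Euler characteristic is multiplicative for every `k ≥ 0`. -/
theorem chiOrb_mul (k : ℕ) (X₁ G₁ X₂ G₂ : Type) [Group G₁] [Group G₂]
    [MulAction G₁ X₁] [MulAction G₂ X₂] [Finite G₁] [Finite G₂] [Finite X₁] [Finite X₂] :
    chiOrb k (X₁ × X₂) (G₁ × G₂) = chiOrb k X₁ G₁ * chiOrb k X₂ G₂ :=
  chiOrb_mul_general k X₁ G₁ X₂ G₂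
end

section
/- For a finite set X with an action of a finite group G that is a subgroup of a finite group H, the orbifold Euler characteristic is induction-invariant: χ^(1)(Ind_G^H X, H) = χ^(1)(X, G), where Ind_G^H X = (H × X)/∼ with (h,x) ∼ (hg, g⁻¹x) for g ∈ G, and H acts by h₀·[(h,x)] = [(h₀h, x)]. -/
variable {H : Type} [Group H] (G : Subgroup H) (X : Type) [MulAction G X]

/-- The equivalence relation on `H × X` with `(h,x) ∼ (hg, g⁻¹x)` for `g ∈ G`. -/
def indSetoid : Setoid (H × X) where
  r p q := ∃ g : G, q.1 = p.1 * (g : H) ∧ q.2 = g⁻¹ • p.2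
  iseqv := by
    constructor
    · intro p; exact ⟨1, by simp⟩
    · rintro p q ⟨g, h1, h2⟩
      exact ⟨g⁻¹, by simp [h1, mul_assoc], by simp [h2]⟩
    · rintro p q r ⟨g, h1, h2⟩ ⟨g', h1', h2'⟩
      exact ⟨g * g', by simp [h1', h1, mul_assoc], by simp [h2', h2, mul_smul]⟩

/-- The induced `H`-set `Ind_G^H X = (H × X)/∼`. -/
def IndSet : Type := Quotient (indSetoid G X)

instance indSetMulAction : MulAction H (IndSet G X) where
  smul h := Quotient.map (fun p => (h * p.1, p.2))
    (by rintro p q ⟨g, h1, h2⟩; exact ⟨g, by simp [h1, mul_assoc], h2⟩)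
  one_smul := by
    rintro ⟨p⟩
    exact Quotient.sound ⟨1, by simp⟩
  mul_smul a b := by
    rintro ⟨p⟩
    exact Quotient.sound ⟨1, by simp [mul_assoc]⟩

open MulAction

abbrev Inertia (K : Type) [Group K] (Y : Type) [MulAction K Y] : Type :=
  {p : K × Y // p.1 • p.2 = p.2}

section

variable {K : Type} [Group K] {Y : Type} [MulAction K Y]

instance : SMul K (Inertia K Y) where
  smul g p := ⟨(g * p.1.1 * g⁻¹, g • p.1.2), by
    simp only [smul_smul, inv_mul_cancel_right, mul_smul, p.2]⟩

@[simp] lemma Inertia.coe_smul (g : K) (p : Inertia K Y) :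
    ((g • p : Inertia K Y) : K × Y) = (g * p.1.1 * g⁻¹, g • p.1.2) := rfl

instance : MulAction K (Inertia K Y) where
  one_smul p := Subtype.ext <| by simp
  mul_smul a b p := Subtype.ext <| by simp [mul_assoc, mul_smul]

namespace Inertia

def ofFixedBy (k : K) (y : fixedBy Y k) : Inertia K Y := ⟨(k, y), y.2⟩

lemma ofFixedBy_smul (k : K) (z : Subgroup.centralizer ({k} : Set K)) (y : fixedBy Y k) :
    ofFixedBy k (z • y : fixedBy Y k) = (z : K) • ofFixedBy k y := by
  refine Subtype.ext (Prod.ext ?_ rfl)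
  simp [ofFixedBy, Subgroup.mem_centralizer_singleton_iff.mp z.2]

noncomputable def sigmaOrbitsFixedByMap :
    (Σ c : ConjClasses K, orbitRel.Quotient (Subgroup.centralizer ({c.out} : Set K))
      (fixedBy Y c.out)) → orbitRel.Quotient K (Inertia K Y)
  | ⟨c, q⟩ => Quotient.map' (ofFixedBy c.out) (by
      rintro _ y ⟨z, rfl⟩
      exact ⟨z, (ofFixedBy_smul c.out z y).symm⟩) q

lemma sigmaOrbitsFixedByMap_injective :
    Function.Injective (sigmaOrbitsFixedByMap (K := K) (Y := Y)) := by
  rintro ⟨c, ⟨y⟩⟩ ⟨c', ⟨y'⟩⟩ h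
  obtain ⟨k, hk⟩ := Quotient.exact' h
  have hconj : k * c'.out * k⁻¹ = c.out := congrArg (fun p => p.1.1) hk
  obtain rfl : c' = c := by
    rw [← Quotient.out_eq c, ← Quotient.out_eq c']
    exact Quotient.sound (isConj_iff.mpr ⟨k, hconj⟩)
  have hk_mem : k ∈ Subgroup.centralizer ({c'.out} : Set K) :=
    Subgroup.mem_centralizer_singleton_iff.mpr (mul_inv_eq_iff_eq_mul.mp hconj)
  exact congrArg (Sigma.mk c')
    (Quotient.sound' ⟨⟨k, hk_mem⟩, Subtype.ext (congrArg (fun p => p.1.2) hk)⟩)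

lemma sigmaOrbitsFixedByMap_surjective :
    Function.Surjective (sigmaOrbitsFixedByMap (K := K) (Y := Y)) := by
  rintro ⟨p⟩
  obtain ⟨k, hk⟩ := isConj_iff.mp (Quotient.mk_out' (s₁ := IsConj.setoid K) p.1.1).symm
  set c : ConjClasses K := ConjClasses.mk p.1.1
  have hfix : (k • p).1.2 ∈ fixedBy Y c.out := hk ▸ (k • p).2
  exact ⟨⟨c, ⟦⟨_, hfix⟩⟧⟩, Quotient.sound' ⟨k, Subtype.ext (Prod.ext hk rfl)⟩⟩

end Inertia

theorem chiOrb_one_eq_card_orbits_inertia [Finite K] [Finite Y] :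
    chiOrb 1 Y K = Nat.card (orbitRel.Quotient K (Inertia K Y)) := by
  have := Fintype.ofFinite (ConjClasses K)
  rw [← Nat.card_congr (Equiv.ofBijective _ ⟨Inertia.sigmaOrbitsFixedByMap_injective,
    Inertia.sigmaOrbitsFixedByMap_surjective⟩), Nat.card_sigma, chiOrb, finsum_eq_sum_of_fintype]
  rfl

end

namespace IndSet

def mk (s : H) (x : X) : IndSet G X := Quotient.mk (indSetoid G X) (s, x)

variable {G X}

lemma smul_mk (h s : H) (x : X) : h • mk G X s x = mk G X (h * s) x := rfl

lemma mk_eq_mk_iff {s s' : H} {x x' : X} :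
    mk G X s x = mk G X s' x' ↔ ∃ g : G, s' = s * g ∧ x' = g⁻¹ • x :=
  Quotient.eq

lemma mk_mul_coe (s : H) (g : G) (x : X) : mk G X (s * g) x = mk G X s (g • x) :=
  mk_eq_mk_iff.mpr ⟨g⁻¹, by simp [mul_assoc], by simp⟩

lemma smul_mk_eq_self_iff (h s : H) (x : X) :
    h • mk G X s x = mk G X s x ↔ ∃ g : G, (g : H) = s⁻¹ * h * s ∧ g • x = x := by
  rw [smul_mk, mk_eq_mk_iff]
  constructor
  · rintro ⟨g, hs, hx⟩
    refine ⟨g⁻¹, ?_, hx.symm⟩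
    rw [Subgroup.coe_inv, mul_assoc]
    exact eq_inv_mul_of_mul_eq (mul_inv_eq_of_eq_mul hs)
  · rintro ⟨g, hs, hx⟩
    refine ⟨g⁻¹, ?_, by simpa using hx.symm⟩
    rw [Subgroup.coe_inv, hs]
    group

lemma mem_of_smul_mk_one_eq_mk_one {h : H} {x x' : X} (hx : h • mk G X 1 x = mk G X 1 x') :
    h ∈ G := by
  rw [smul_mk, mk_eq_mk_iff] at hx
  obtain ⟨g, hg, -⟩ := hx
  rw [mul_one, eq_comm, mul_eq_one_iff_eq_inv] at hg
  exact hg ▸ inv_mem g.2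

lemma mk_one_injective : Function.Injective (mk G X 1) := by
  intro x x' h
  obtain ⟨g, hg, rfl⟩ := mk_eq_mk_iff.mp h
  rw [one_mul, eq_comm, OneMemClass.coe_eq_one] at hg
  simp [hg]

end IndSet

namespace Inertia

open IndSet

def induce (p : Inertia G X) : Inertia H (IndSet G X) :=
  ⟨(p.1.1, mk G X 1 p.1.2), (smul_mk_eq_self_iff _ _ _).mpr ⟨p.1.1, by simp, p.2⟩⟩

variable {G X}

lemma induce_smul (g : G) (p : Inertia G X) : induce G X (g • p) = (g : H) • induce G X p := by
  refine Subtype.ext (Prod.ext ?_ ?_)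
  · simp [induce]
  · simp [induce, smul_mk, ← mk_mul_coe]

lemma induce_injective : Function.Injective (induce G X) := by
  intro p q h
  exact Subtype.ext (Prod.ext (Subtype.ext (congrArg (fun r => r.1.1) h))
    (mk_one_injective (congrArg (fun r => r.1.2) h)))

noncomputable def orbitsInduce :
    orbitRel.Quotient G (Inertia G X) → orbitRel.Quotient H (Inertia H (IndSet G X)) :=
  Quotient.map' (induce G X) (by
    rintro _ p ⟨g, rfl⟩
    exact ⟨g, (induce_smul g p).symm⟩)

lemma orbitsInduce_injective : Function.Injective (orbitsInduce (G := G) (X := X)) := by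
  rintro ⟨p⟩ ⟨q⟩ hpq
  obtain ⟨h, hh⟩ := Quotient.exact' hpq
  have hG : h ∈ G := mem_of_smul_mk_one_eq_mk_one (congrArg (fun r => r.1.2) hh)
  refine Quotient.sound' ⟨⟨h, hG⟩, induce_injective ?_⟩
  rw [induce_smul]
  exact hh

lemma orbitsInduce_surjective : Function.Surjective (orbitsInduce (G := G) (X := X)) := by
  rintro ⟨⟨⟨h, ⟨s, x⟩⟩, hfix⟩⟩
  obtain ⟨g, hg, hgx⟩ := (smul_mk_eq_self_iff h s x).mp hfix
  refine ⟨⟦⟨(g, x), hgx⟩⟧, Quotient.sound' ⟨s⁻¹, Subtype.ext (Prod.ext ?_ ?_)⟩⟩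
  · simp [induce, hg]
  · show s⁻¹ • mk G X s x = mk G X 1 x
    rw [smul_mk, inv_mul_cancel]

end Inertia

/-- Induction invariance of the orbifold Euler characteristic:
`χ⁽¹⁾(Ind_G^H X, H) = χ⁽¹⁾(X, G)`. -/
theorem chiOrb_one_ind [Finite H] [Finite X] :
    chiOrb 1 (IndSet G X) H = chiOrb 1 X G := by
  have : Finite (IndSet G X) := Quotient.finite _
  rw [chiOrb_one_eq_card_orbits_inertia, chiOrb_one_eq_card_orbits_inertia]
  exact (Nat.card_congr (Equiv.ofBijective _
    ⟨Inertia.orbitsInduce_injective, Inertia.orbitsInduce_surjective⟩)).symm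
end

section
/- Any λ-structure on a commutative ring R determines a power structure: every series A(t) ∈ 1 + t·R[[t]] can be written uniquely as an infinite product ∏_{k≥1} λ_{b_k}(t^k) with b_k ∈ R, where λ_b(t) = 1 + bt + O(t²) is the λ-series; setting A(t)^m := ∏_{k≥1} λ_{m·b_k}(t^k) is well-defined. -/
/-- Substitution `t ↦ t^k` in a power series. -/
noncomputable def expandPS {R : Type} [CommRing R] (k : ℕ) (A : PowerSeries R) :
    PowerSeries R :=
  PowerSeries.mk fun n => if k ∣ n then PowerSeries.coeff (R := R) (n / k) A else 0

/-!
Since `λ_b(t^n) ≡ 1 + b tⁿ (mod tⁿ⁺¹)`, multiplying the partial product `∏_{k<n} λ_{b_k}(t^k)`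
by `λ_{b_n}(t^n)` leaves its coefficients below `tⁿ` unchanged and adds `b_n` to the coefficient
of `tⁿ`. Matching the coefficient of `tⁿ` with that of `A` is therefore a triangular system
`b_n = aₙ - (a polynomial in b_1, …, b_{n-1})`, which has exactly one solution.
-/

open PowerSeries Finset

theorem existsUnique_forall_eq_of_dependsOn_Iio {α : Type*} [Nonempty α]
    (f : ℕ → (ℕ → α) → α) (hf : ∀ n, DependsOn (f n) (Set.Iio n)) :
    ∃! b : ℕ → α, ∀ n, b n = f n b := by
  obtain ⟨a⟩ := ‹Nonempty α›
  let b : ℕ → α := Nat.strongRec fun n ih => f n fun k => if h : k < n then ih k h else a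
  have hb : ∀ n, b n = f n b := fun n => by
    rw [show b n = _ from Nat.strongRec_eq _ n]
    exact hf n fun k hk => dif_pos hk
  refine ⟨b, hb, fun c hc => funext fun n => ?_⟩
  induction n using Nat.strong_induction_on with
  | _ n ih => rw [hc n, hb n]; exact hf n fun k hk => ih k hk

section expandPS

variable {R : Type} [CommRing R]

@[simp]
theorem coeff_expandPS (k n : ℕ) (A : PowerSeries R) :
    coeff n (expandPS k A) = if k ∣ n then coeff (n / k) A else 0 := by
  simp [expandPS]

theorem coeff_self_expandPS_mul {k : ℕ} (hk : 0 < k) (A P : PowerSeries R) :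
    coeff k (expandPS k A * P) = coeff 0 A * coeff k P + coeff 1 A * coeff 0 P := by
  rw [coeff_mul, sum_eq_add (0, k) (k, 0) (by simp [hk.ne'])]
  · simp [Nat.div_self hk]
  · rintro ⟨i, j⟩ hij hne
    rw [HasAntidiagonal.mem_antidiagonal] at hij
    have hi : 0 < i ∧ i < k := by simp only [ne_eq, Prod.mk.injEq] at hne; omega
    simp [Nat.not_dvd_of_pos_of_lt hi.1 hi.2]
  all_goals simp

theorem coeff_zero_prod_expandPS (s : Finset ℕ) (Q : ℕ → PowerSeries R)
    (hQ : ∀ k ∈ s, coeff 0 (Q k) = 1) : coeff 0 (∏ k ∈ s, expandPS k (Q k)) = 1 := by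
  rw [coeff_zero_eq_constantCoeff, map_prod]
  exact prod_eq_one fun k hk => by simp [← coeff_zero_eq_constantCoeff_apply, hQ k hk]

theorem coeff_prod_Icc_expandPS {n : ℕ} (hn : 0 < n) (Q : ℕ → PowerSeries R)
    (hQ : ∀ k, coeff 0 (Q k) = 1) :
    coeff n (∏ k ∈ Icc 1 n, expandPS k (Q k)) =
      coeff n (∏ k ∈ Ico 1 n, expandPS k (Q k)) + coeff 1 (Q n) := by
  rw [← Ico_insert_right hn, prod_insert right_notMem_Ico, coeff_self_expandPS_mul hn, hQ,
    coeff_zero_prod_expandPS _ _ fun k _ => hQ k, one_mul, mul_one]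

end expandPS

theorem lambdaStructure_unique_factorization_general (R : Type) [CommRing R]
    (lam : R → PowerSeries R)
    (hconst : ∀ a : R, PowerSeries.coeff (R := R) 0 (lam a) = 1)
    (hlin : ∀ a : R, PowerSeries.coeff (R := R) 1 (lam a) = a)
    (A : PowerSeries R) (hA : PowerSeries.coeff (R := R) 0 A = 1) :
    ∃! b : ℕ → R, b 0 = 0 ∧ ∀ N : ℕ,
      PowerSeries.coeff (R := R) N A =
        PowerSeries.coeff (R := R) N (∏ k ∈ Finset.Icc 1 N, expandPS k (lam (b k))) := by
  let f : ℕ → (ℕ → R) → R := fun n b =>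
    if n = 0 then 0 else coeff n A - coeff n (∏ k ∈ Ico 1 n, expandPS k (lam (b k)))
  have hf (n : ℕ) : DependsOn (f n) (Set.Iio n) := fun b c hbc => by
    simp only [f]
    rw [prod_congr rfl fun k hk => by rw [hbc k (mem_Ico.1 hk).2]]
  refine (existsUnique_congr fun b => ?_).2 (existsUnique_forall_eq_of_dependsOn_Iio f hf)
  have hstep {n : ℕ} (hn : 0 < n) :
      coeff n A = coeff n (∏ k ∈ Icc 1 n, expandPS k (lam (b k))) ↔ b n = f n b := by
    rw [coeff_prod_Icc_expandPS hn _ fun k => hconst (b k), hlin]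
    simp only [f, hn.ne', if_false]
    rw [eq_sub_iff_add_eq', eq_comm]
  constructor
  · rintro ⟨hb0, hcoeff⟩ (_ | n)
    · simpa [f] using hb0
    · exact (hstep n.succ_pos).1 (hcoeff _)
  · refine fun hb => ⟨by simpa [f] using hb 0, fun N => ?_⟩
    rcases N.eq_zero_or_pos with rfl | hN
    · simp [hA]
    · exact (hstep hN).2 (hb N)

/-- A λ-structure on `R` determines a power structure: every `A(t) ∈ 1 + t·R[[t]]`
factors uniquely as `∏_{k≥1} λ_{b_k}(t^k)` (the product converging `t`-adically, i.e.
coefficientwise via the finite partial products). -/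
theorem lambdaStructure_unique_factorization (R : Type) [CommRing R]
    (lam : R → PowerSeries R)
    (hmul : ∀ a b : R, lam (a + b) = lam a * lam b)
    (hconst : ∀ a : R, PowerSeries.coeff (R := R) 0 (lam a) = 1)
    (hlin : ∀ a : R, PowerSeries.coeff (R := R) 1 (lam a) = a)
    (A : PowerSeries R) (hA : PowerSeries.coeff (R := R) 0 A = 1) :
    ∃! b : ℕ → R, b 0 = 0 ∧ ∀ N : ℕ,
      PowerSeries.coeff (R := R) N A =
        PowerSeries.coeff (R := R) N (∏ k ∈ Finset.Icc 1 N, expandPS k (lam (b k))) :=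
  lambdaStructure_unique_factorization_general R lam hconst hlin A hA
end

section
/- The number of S_n-orbits on the set {(s, x) ∈ S_n × Xⁿ : s·x = x} (where S_n acts on Xⁿ by permuting coordinates and on itself by conjugation) has generating series Σ_{n≥0} (#orbits)·tⁿ = ∏_{r≥1} (1−t^r)^{−|X|}, for any finite set X. -/
attribute [local instance] arrowAction

/-- `G` acts on the set of pairs `(g, x)` with `g • x = x` by
`h • (g, x) = (h g h⁻¹, h • x)`. -/
instance fixedPairsAction (G X : Type) [Group G] [MulAction G X] :
    MulAction G {p : G × X // p.1 • p.2 = p.2} where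
  smul h p := ⟨(h * p.1.1 * h⁻¹, h • p.1.2), by
    have hp := p.2
    show (h * p.1.1 * h⁻¹) • (h • p.1.2) = h • p.1.2
    rw [← mul_smul, inv_mul_cancel_right, mul_smul, hp]⟩
  one_smul p := Subtype.ext (Prod.ext
    (show 1 * p.1.1 * 1⁻¹ = p.1.1 by simp) (one_smul G p.1.2))
  mul_smul a b p := Subtype.ext (Prod.ext
    (show (a * b) * p.1.1 * (a * b)⁻¹ = a * (b * p.1.1 * b⁻¹) * a⁻¹ by
      simp [mul_assoc]) (mul_smul a b p.1.2))

/-!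
A pair `(s, x)` with `s • x = x` is a permutation `s` together with a colouring `x` that is
constant on the cycles of `s`. Restricting `s` to each colour class `x⁻¹ {y}` gives a permutation
whose cycle lengths form a partition; two pairs lie in the same `Sₙ`-orbit iff these partitions
agree for every colour, and every family of partitions of total size `n` occurs. So the orbits
are counted by `|X|`-coloured partitions of `n`, whose generating series is
`∏_{r ≥ 1} (1 - t^r)^{-|X|}`.
-/

open Finset Equiv Equiv.Perm PowerSeries

namespace Equiv.Perm

variable {α β : Type*} [Fintype α] [DecidableEq α] [Fintype β] [DecidableEq β]

theorem cycleType_permCongr (e : α ≃ β) (σ : Perm α) :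
    (e.permCongr σ).cycleType = σ.cycleType := by
  have h : e.permCongr σ =
      σ.extendDomain (e.trans (subtypeUnivEquiv fun _ => trivial).symm) := by
    ext b
    simp [permCongr_apply, extendDomain_apply_subtype]
  rw [h, cycleType_extendDomain]

theorem parts_partition_permCongr (e : α ≃ β) (σ : Perm α) :
    (e.permCongr σ).partition.parts = σ.partition.parts := by
  simp only [parts_partition, cycleType_permCongr, ← sum_cycleType, Fintype.card_congr e]

theorem exists_permCongr_eq_of_parts_partition_eq {σ : Perm α} {τ : Perm β}
    (h : σ.partition.parts = τ.partition.parts) : ∃ e : α ≃ β, e.permCongr σ = τ := by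
  have hcard : Fintype.card α = Fintype.card β := by
    rw [← σ.partition.parts_sum, ← τ.partition.parts_sum, h]
  let e₀ := Fintype.equivOfCardEq hcard
  have hconj : IsConj (e₀.permCongr σ) τ := by
    rw [isConj_iff_cycleType_eq, cycleType_permCongr, ← filter_parts_partition_eq_cycleType,
      ← filter_parts_partition_eq_cycleType, h]
  obtain ⟨c, hc⟩ := isConj_iff.mp hconj
  exact ⟨e₀.trans c, by rw [← hc]; ext a; simp [permCongr_apply]⟩

theorem exists_parts_partition_eq {m : Multiset ℕ} (hpos : ∀ a ∈ m, 0 < a)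
    (hsum : m.sum = Fintype.card α) : ∃ σ : Perm α, σ.partition.parts = m := by
  have hones : m.filter (¬ 2 ≤ ·) = Multiset.replicate (m.filter (¬ 2 ≤ ·)).card 1 :=
    Multiset.eq_replicate_card.mpr fun a ha => by
      have := Multiset.mem_filter.mp ha
      have := hpos a this.1
      omega
  have hsplit := Multiset.filter_add_not (2 ≤ ·) m
  have hsum' := congrArg Multiset.sum hsplit
  rw [Multiset.sum_add, hones, Multiset.sum_replicate, smul_eq_mul, mul_one] at hsum'
  obtain ⟨σ, hσ⟩ : ∃ σ : Perm α, σ.cycleType = m.filter (2 ≤ ·) :=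
    (exists_with_cycleType_iff α).mpr ⟨by omega, fun a ha => (Multiset.mem_filter.mp ha).2⟩
  refine ⟨σ, ?_⟩
  rw [parts_partition, ← sum_cycleType, hσ, ← hsum, ← hsum', Nat.add_sub_cancel_left, ← hones,
    hsplit]

end Equiv.Perm

namespace PowerSeries

variable {R : Type*}

variable (R) in
def invOneSubXPow [Semiring R] (r : ℕ) : R⟦X⟧ := mk fun k => if r ∣ k then 1 else 0

theorem invOneSubXPow_mul_one_sub_X_pow [Ring R] {r : ℕ} (hr : 0 < r) :
    invOneSubXPow R r * (1 - X ^ r) = 1 := by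
  ext d
  rw [mul_sub, mul_one, map_sub, coeff_one, coeff_mul_X_pow', invOneSubXPow, coeff_mk, coeff_mk]
  by_cases hd : d = 0
  · simp [hd, hr.ne']
  by_cases hrd : r ≤ d
  · obtain ⟨e, rfl⟩ := Nat.exists_eq_add_of_le' hrd
    simp [hr.ne', Nat.dvd_add_self_right]
  · simp [hd, hrd, Nat.not_dvd_of_pos_of_lt (Nat.pos_of_ne_zero hd) (not_le.mp hrd)]

theorem coeff_prod_invOneSubXPow [CommSemiring R] {ι : Type*} [DecidableEq ι] (s : Finset ι)
    (w : ι → ℕ) (d : ℕ) :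
    coeff d (∏ i ∈ s, invOneSubXPow R (w i)) =
      #{l ∈ s.finsuppAntidiag d | ∀ i ∈ s, w i ∣ l i} := by
  rw [coeff_prod, ← sum_boole]
  refine sum_congr rfl fun l _ => ?_
  rw [← prod_boole]
  exact prod_congr rfl fun i _ => by simp [invOneSubXPow]

theorem coeff_mul_eq_of_coeff_eq [Semiring R] {A B : R⟦X⟧} (C : R⟦X⟧) (N : ℕ)
    (h : ∀ d ≤ N, coeff d A = coeff d B) : coeff N (A * C) = coeff N (B * C) := by
  simp only [coeff_mul]
  refine sum_congr rfl fun p hp => ?_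
  rw [h p.1 (by have := mem_antidiagonal.mp hp; omega)]

end PowerSeries

def coloredPartitions (X : Type*) [Fintype X] (n : ℕ) : Set (X → Multiset ℕ) :=
  {f | (∀ y, ∀ r ∈ f y, 0 < r) ∧ ∑ y, (f y).sum = n}

namespace coloredPartitions

variable {X : Type*}

def ofWeight (N : ℕ) (l : ℕ × X →₀ ℕ) (y : X) : Multiset ℕ :=
  ∑ r ∈ Icc 1 N, Multiset.replicate (l (r, y) / r) r

theorem count_ofWeight (N : ℕ) (l : ℕ × X →₀ ℕ) (y : X) (r : ℕ) :
    (ofWeight N l y).count r = if r ∈ Icc 1 N then l (r, y) / r else 0 := by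
  simp [ofWeight, Multiset.count_sum', Multiset.count_replicate]

variable [Fintype X] {N d : ℕ}

theorem mem_Icc_of_mem {f : X → Multiset ℕ} (hf : f ∈ coloredPartitions X d) (hd : d ≤ N)
    {y : X} {r : ℕ} (hr : r ∈ f y) : r ∈ Icc 1 N := by
  have hle : (f y).sum ≤ d :=
    hf.2 ▸ single_le_sum (f := fun y => (f y).sum) (fun _ _ => Nat.zero_le _) (mem_univ y)
  exact mem_Icc.mpr ⟨hf.1 y r hr, (Multiset.le_sum_of_mem hr).trans (hle.trans hd)⟩

variable [DecidableEq X]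

/-- Records a coloured partition by `(r, y) ↦ r · (multiplicity of the part r in colour y)`:
these are the exponent vectors in `∏_{r, y} (1 + t^r + t^{2r} + ⋯)`. -/
noncomputable def weight (f : X → Multiset ℕ) : ℕ × X →₀ ℕ :=
  Finsupp.onFinset (univ.biUnion fun y => (f y).toFinset ×ˢ {y})
    (fun q => q.1 * (f q.2).count q.1) fun q hq => by
      obtain ⟨r, y⟩ := q
      simp only [mem_biUnion, mem_univ, mem_product, Multiset.mem_toFinset, mem_singleton,
        true_and]
      exact ⟨y, Multiset.count_ne_zero.mp (right_ne_zero_of_mul hq), rfl⟩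

theorem weight_apply (f : X → Multiset ℕ) (q : ℕ × X) : weight f q = q.1 * (f q.2).count q.1 :=
  rfl

variable (X) in
def divisibleAntidiag (N d : ℕ) : Finset (ℕ × X →₀ ℕ) :=
  {l ∈ (Icc 1 N ×ˢ univ).finsuppAntidiag d | ∀ q ∈ Icc 1 N ×ˢ univ, q.1 ∣ l q}

theorem mem_divisibleAntidiag {l : ℕ × X →₀ ℕ} :
    l ∈ divisibleAntidiag X N d ↔
      (∑ q ∈ Icc 1 N ×ˢ univ, l q = d ∧ l.support ⊆ Icc 1 N ×ˢ univ) ∧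
        ∀ q ∈ Icc 1 N ×ˢ univ, q.1 ∣ l q := by
  rw [divisibleAntidiag, mem_filter, mem_finsuppAntidiag]

theorem weight_mem {f : X → Multiset ℕ} (hf : f ∈ coloredPartitions X d) (hd : d ≤ N) :
    weight f ∈ divisibleAntidiag X N d := by
  refine mem_divisibleAntidiag.mpr ⟨⟨?_, fun q hq => ?_⟩, fun q _ => dvd_mul_right _ _⟩
  · rw [sum_product_right, ← hf.2]
    refine sum_congr rfl fun y _ => ?_
    rw [sum_multiset_count_of_subset (f y) (Icc 1 N) fun r hr =>
      mem_Icc_of_mem hf hd (Multiset.mem_toFinset.mp hr)]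
    exact sum_congr rfl fun r _ => by rw [weight_apply, smul_eq_mul, mul_comm]
  · obtain ⟨r, y⟩ := q
    have hr : r ∈ f y :=
      Multiset.count_ne_zero.mp (right_ne_zero_of_mul (Finsupp.mem_support_iff.mp hq))
    exact mem_product.mpr ⟨mem_Icc_of_mem hf hd hr, mem_univ y⟩

theorem ofWeight_mem {l : ℕ × X →₀ ℕ} (hl : l ∈ divisibleAntidiag X N d) :
    ofWeight N l ∈ coloredPartitions X d := by
  obtain ⟨⟨hsum, -⟩, hdvd⟩ := mem_divisibleAntidiag.mp hl
  refine ⟨fun y r hr => ?_, ?_⟩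
  · obtain ⟨r', hr', hr⟩ := Multiset.mem_sum.mp hr
    rw [Multiset.eq_of_mem_replicate hr]
    exact (mem_Icc.mp hr').1
  · rw [← hsum, sum_product_right]
    refine sum_congr rfl fun y _ => ?_
    simp only [ofWeight, Multiset.sum_sum, Multiset.sum_replicate, smul_eq_mul]
    exact sum_congr rfl fun r hr =>
      Nat.div_mul_cancel (hdvd (r, y) (mem_product.mpr ⟨hr, mem_univ y⟩))

theorem ofWeight_weight {f : X → Multiset ℕ} (hf : f ∈ coloredPartitions X d) (hd : d ≤ N) :
    ofWeight N (weight f) = f := by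
  funext y
  ext r
  rw [count_ofWeight, weight_apply]
  split_ifs with hr
  · exact Nat.mul_div_cancel_left _ (mem_Icc.mp hr).1
  · exact (Multiset.count_eq_zero.mpr fun h => hr (mem_Icc_of_mem hf hd h)).symm

theorem weight_ofWeight {l : ℕ × X →₀ ℕ} (hl : l ∈ divisibleAntidiag X N d) :
    weight (ofWeight N l) = l := by
  obtain ⟨⟨-, hsupp⟩, hdvd⟩ := mem_divisibleAntidiag.mp hl
  ext ⟨r, y⟩
  rw [weight_apply, count_ofWeight]
  split_ifs with hr
  · exact Nat.mul_div_cancel' (hdvd (r, y) (mem_product.mpr ⟨hr, mem_univ y⟩))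
  · exact (Finsupp.notMem_support_iff.mp fun h => hr (mem_product.mp (hsupp h)).1).symm

noncomputable def equivDivisibleAntidiag (hd : d ≤ N) :
    coloredPartitions X d ≃ divisibleAntidiag X N d where
  toFun f := ⟨weight f, weight_mem f.2 hd⟩
  invFun l := ⟨ofWeight N l, ofWeight_mem l.2⟩
  left_inv f := Subtype.ext (ofWeight_weight f.2 hd)
  right_inv l := Subtype.ext (weight_ofWeight l.2)

theorem card_eq_coeff_prod_invOneSubXPow (hd : d ≤ N) :
    (Nat.card (coloredPartitions X d) : ℤ) =
      coeff d (∏ q ∈ Icc 1 N ×ˢ (univ : Finset X), invOneSubXPow ℤ q.1) := by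
  rw [Nat.card_congr (equivDivisibleAntidiag hd), Nat.card_eq_fintype_card, Fintype.card_coe,
    coeff_prod_invOneSubXPow]
  rfl

end coloredPartitions

abbrev FixedPairs (α X : Type*) := {p : Perm α × (α → X) // p.1 • p.2 = p.2}

namespace FixedPairs

section

variable {α β X : Type*}

theorem smul_eq_self_iff {s : Perm α} {x : α → X} : s • x = x ↔ ∀ a, x (s a) = x a := by
  refine funext_iff.trans ⟨fun h a => ?_, fun h b => ?_⟩
  · have h' : x (s⁻¹ (s a)) = x (s a) := h (s a)
    simpa using h'.symm
  · show x (s⁻¹ b) = x b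
    simpa using (h (s⁻¹ b)).symm

theorem snd_apply_fst (p : FixedPairs α X) (a : α) : p.1.2 (p.1.1 a) = p.1.2 a :=
  smul_eq_self_iff.mp p.2 a

def congr (e : α ≃ β) (p : FixedPairs α X) : FixedPairs β X :=
  ⟨(e.permCongr p.1.1, p.1.2 ∘ e.symm), smul_eq_self_iff.mpr fun b => by
    simpa [permCongr_apply] using snd_apply_fst p (e.symm b)⟩

theorem smul_eq_congr {α X : Type} (g : Perm α) (p : FixedPairs α X) : g • p = p.congr g := rfl

def colorPerm (p : FixedPairs α X) (y : X) : Perm {a // p.1.2 a = y} :=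
  p.1.1.subtypePerm fun a => by rw [snd_apply_fst]

theorem colorPerm_congr (e : α ≃ β) (p : FixedPairs α X) (y : X) :
    (p.congr e).colorPerm y =
      (e.subtypeEquiv fun a => by simp [congr]).permCongr (p.colorPerm y) :=
  rfl

variable [Fintype α] [DecidableEq α] [Fintype β] [DecidableEq β] [DecidableEq X]

def colorType (p : FixedPairs α X) (y : X) : Multiset ℕ := (p.colorPerm y).partition.parts

theorem colorType_congr (e : α ≃ β) (p : FixedPairs α X) :
    (p.congr e).colorType = p.colorType := by
  funext y
  rw [colorType, colorType, colorPerm_congr, parts_partition_permCongr]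

theorem exists_congr_eq_of_colorType_eq {p : FixedPairs α X} {q : FixedPairs β X}
    (h : p.colorType = q.colorType) : ∃ e : α ≃ β, p.congr e = q := by
  choose e he using fun y => exists_permCongr_eq_of_parts_partition_eq (congrFun h y)
  set E := ofFiberEquiv e
  have hE : ∀ y a (ha : p.1.2 a = y), (e y ⟨a, ha⟩ : β) = E a := by
    rintro _ a rfl
    rfl
  have hcomm : ∀ a, E (p.1.1 a) = q.1.1 (E a) := fun a => by
    have h := congrArg Subtype.val (DFunLike.congr_fun (he (p.1.2 a)) (e _ ⟨a, rfl⟩))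
    rw [permCongr_apply, symm_apply_apply] at h
    rw [← hE _ _ (snd_apply_fst p a)]
    exact h
  refine ⟨E, Subtype.ext (Prod.ext (Equiv.ext fun b => ?_) (funext fun b => ?_))⟩
  · simpa [congr, permCongr_apply] using hcomm (E.symm b)
  · show p.1.2 (E.symm b) = q.1.2 b
    rw [← ofFiberEquiv_map e (E.symm b), apply_symm_apply]

theorem pos_of_mem_colorType {p : FixedPairs α X} {y : X} {r : ℕ} (h : r ∈ p.colorType y) :
    0 < r :=
  (p.colorPerm y).partition.parts_pos h

variable [Fintype X]

theorem colorType_mem_coloredPartitions (p : FixedPairs α X) :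
    p.colorType ∈ coloredPartitions X (Fintype.card α) := by
  refine ⟨fun _ _ => pos_of_mem_colorType, ?_⟩
  simp only [colorType, Nat.Partition.parts_sum]
  rw [← Fintype.card_sigma, Fintype.card_congr (sigmaFiberEquiv p.1.2)]

theorem exists_colorType_eq {f : X → Multiset ℕ} (hf : f ∈ coloredPartitions X (Fintype.card α)) :
    ∃ p : FixedPairs α X, p.colorType = f := by
  choose σ hσ using fun y =>
    exists_parts_partition_eq (α := Fin (f y).sum) (hf.1 y) (Fintype.card_fin _).symm
  let p₀ : FixedPairs (Σ y, Fin (f y).sum) X :=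
    ⟨(Perm.sigmaCongrRight σ, Sigma.fst), smul_eq_self_iff.mpr fun _ => rfl⟩
  have hp₀ : p₀.colorType = f := funext fun y => by
    have : p₀.colorPerm y = (sigmaSubtype y).symm.permCongr (σ y) :=
      Equiv.ext fun ⟨⟨_, _⟩, h⟩ => by subst h; rfl
    rw [colorType, this, parts_partition_permCongr, hσ]
  have hcard : Fintype.card (Σ y, Fin (f y).sum) = Fintype.card α := by simp [hf.2]
  exact ⟨p₀.congr (Fintype.equivOfCardEq hcard), by rw [colorType_congr, hp₀]⟩

theorem range_colorType :
    Set.range (colorType (α := α) (X := X)) = coloredPartitions X (Fintype.card α) :=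
  Set.ext fun _ => ⟨fun ⟨p, hp⟩ => hp ▸ colorType_mem_coloredPartitions p, exists_colorType_eq⟩

end

section Orbits

open MulAction

variable {α X : Type} [Fintype α] [DecidableEq α] [DecidableEq X]

theorem orbitRel_eq_ker_colorType :
    orbitRel (Perm α) (FixedPairs α X) = Setoid.ker colorType := by
  ext p q
  rw [orbitRel_apply, Setoid.ker_def]
  constructor
  · rintro ⟨g, rfl⟩
    exact (congrArg colorType (smul_eq_congr g q)).trans (colorType_congr g q)
  · intro h
    obtain ⟨e, he⟩ := exists_congr_eq_of_colorType_eq h.symm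
    exact ⟨e, (smul_eq_congr e q).trans he⟩

theorem card_orbitRel_quotient [Fintype X] :
    Nat.card (orbitRel.Quotient (Perm α) (FixedPairs α X)) =
      Nat.card (coloredPartitions X (Fintype.card α)) := by
  rw [orbitRel.Quotient, orbitRel_eq_ker_colorType,
    Nat.card_congr (Setoid.quotientKerEquivRange _), range_colorType]

end Orbits

end FixedPairs

/-- The number of `Sₙ`-orbits of pairs `(s, x)` with `s • x = x` has generating series
`∏_{r≥1} (1-t^r)^{-|X|}`. -/
theorem perm_fixedPairs_orbits_generating_series (X : Type) [Finite X] :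
    ∀ N : ℕ, PowerSeries.coeff (R := ℤ) N
      ((PowerSeries.mk fun n =>
        (Nat.card (MulAction.orbitRel.Quotient (Equiv.Perm (Fin n))
          {p : Equiv.Perm (Fin n) × (Fin n → X) // p.1 • p.2 = p.2}) : ℤ)) *
        ∏ r ∈ Finset.Icc 1 N,
          ((1 : PowerSeries ℤ) - PowerSeries.X ^ r) ^ Nat.card X) =
      (if N = 0 then 1 else 0) := by
  intro N
  classical
  have := Fintype.ofFinite X
  have hinv : (∏ q ∈ Icc 1 N ×ˢ (univ : Finset X), invOneSubXPow ℤ q.1) *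
      ∏ r ∈ Icc 1 N, (1 - PowerSeries.X ^ r) ^ Nat.card X = 1 := by
    rw [prod_product, Nat.card_eq_fintype_card, ← prod_mul_distrib]
    refine prod_eq_one fun r hr => ?_
    simp only [prod_const, card_univ]
    rw [← mul_pow, invOneSubXPow_mul_one_sub_X_pow (mem_Icc.mp hr).1, one_pow]
  rw [coeff_mul_eq_of_coeff_eq _ N fun d hd => ?_, hinv, coeff_one]
  rw [coeff_mk, FixedPairs.card_orbitRel_quotient, Fintype.card_fin,
    coloredPartitions.card_eq_coeff_prod_invOneSubXPow hd]
end
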